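/- Even rows of the quantum baker matrix: for 0 ≤ n, m < N with n even, the entry of the quantum baker matrix is 𝖡_{nm} = 1/√2 if n ≡ 2m (mod N), and 𝖡_{nm} = 0 otherwise. -/

import Mathlib

noncomputable section

noncomputable section

/-- Entry of the `M × M` discrete Fourier transform matrix: `M^{-1/2} e^{-2πiab/M}`. -/
def dftEntry (M a b : ℕ) : ℂ :=
  ((Real.sqrt M : ℝ) : ℂ)⁻¹ * Complex.exp (-(2 * Real.pi * Complex.I * a * b) / M)

/-- The `N × N` discrete Fourier transform matrix `(𝓕^N)_{mn} = N^{-1/2} e^{-2πimn/N}`. -/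
def dftMatrix (N : ℕ) : Matrix (Fin N) (Fin N) ℂ :=
  Matrix.of fun m n : Fin N => dftEntry N m n

/-- The diagonal phase matrix `Z` with `Z_{nn} = e^{iπn/N}`. -/
def Zmat (N : ℕ) : Matrix (Fin N) (Fin N) ℂ :=
  Matrix.diagonal fun n : Fin N => Complex.exp (Real.pi * Complex.I * (n : ℕ) / N)

/-- The block-diagonal matrix `D` with upper-left block `𝓕^{N/2}` and lower-right block
`−𝓕^{N/2}`. -/
def Dmat (N : ℕ) : Matrix (Fin N) (Fin N) ℂ :=
  Matrix.of fun m n : Fin N =>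
    if (m : ℕ) < N / 2 ∧ (n : ℕ) < N / 2 then dftEntry (N / 2) m n
    else if N / 2 ≤ (m : ℕ) ∧ N / 2 ≤ (n : ℕ) then
      -dftEntry (N / 2) ((m : ℕ) - N / 2) ((n : ℕ) - N / 2)
    else 0

/-- The quantum baker matrix `𝖡 = Z (𝓕^N)⁻¹ D Z⁻²`. -/
def bakerMatrix (N : ℕ) : Matrix (Fin N) (Fin N) ℂ :=
  Zmat N * (dftMatrix N)⁻¹ * Dmat N * (Zmat N ^ 2)⁻¹

/-
Write `N = 2M` and `n = 2t`. The DFT matrix is unitary, so `(𝓕^N)⁻¹ = (𝓕^N)ᴴ`; since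
`e^{2πi·2tk/N}` has period `M` in `k`, row `2t` of `(𝓕^N)ᴴ` is `2^{-1/2}` times row `t` of
`(𝓕^M)ᴴ`, repeated on both halves. Against the block-diagonal `D` this gives
`((𝓕^N)ᴴ D)_{2t,m} = ±2^{-1/2} δ_{t, m mod M}`, with `−` on the lower block. The phases of `Z` and
`Z⁻²` contribute `e^{iπ(n−2m)/N}`, which is `1` if `n = 2m` and `−1` if `n = 2m − N`, cancelling
that sign.
-/

open Finset Complex Matrix

theorem IsPrimitiveRoot.sum_range_div_pow_eq_ite {K : Type*} [Field K] {ζ : K} {M : ℕ}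
    (hζ : IsPrimitiveRoot ζ M) {i j : ℕ} (hi : i < M) (hj : j < M) :
    ∑ k ∈ range M, (ζ ^ i / ζ ^ j) ^ k = if i = j then (M : K) else 0 := by
  split_ifs with hij
  · subst hij
    have : ζ ^ i ≠ 0 := pow_ne_zero _ (hζ.ne_zero (by omega))
    simp [div_self this]
  · have hne : ζ ^ i / ζ ^ j ≠ 1 := by
      rw [Ne, div_eq_one_iff_eq (pow_ne_zero _ (hζ.ne_zero (by omega)))]
      exact fun h => hij (hζ.pow_inj hi hj h)
    have hpow : (ζ ^ i / ζ ^ j) ^ M = 1 := by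
      rw [div_pow, ← pow_mul, ← pow_mul, pow_mul', pow_mul' ζ j, hζ.pow_eq_one, one_pow, one_pow,
        div_one]
    rw [geom_sum_eq hne, hpow, sub_self, zero_div]

theorem ofReal_sqrt_natCast_inv_mul_self (M : ℕ) :
    ((√M : ℝ) : ℂ)⁻¹ * ((√M : ℝ) : ℂ)⁻¹ = (M : ℂ)⁻¹ := by
  rw [← mul_inv, ← ofReal_mul, Real.mul_self_sqrt (Nat.cast_nonneg M), ofReal_natCast]

theorem star_dftEntry (M a b : ℕ) :
    star (dftEntry M a b) = ((√M : ℝ) : ℂ)⁻¹ * exp (2 * Real.pi * I * a * b / M) := by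
  simp [dftEntry, ← exp_conj, map_div₀, map_ofNat]

theorem dftMatrix_conjTranspose_mul_self (M : ℕ) : (dftMatrix M)ᴴ * dftMatrix M = 1 := by
  ext i j
  have hM : M ≠ 0 := by have := i.pos; omega
  have hterm : ∀ k : Fin M, star (dftMatrix M k i) * dftMatrix M k j =
      (M : ℂ)⁻¹ *
        (exp (2 * Real.pi * I / M) ^ (i : ℕ) / exp (2 * Real.pi * I / M) ^ (j : ℕ)) ^ (k : ℕ) := by
    intro k
    rw [dftMatrix, of_apply, of_apply, star_dftEntry, dftEntry, mul_mul_mul_comm,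
      ofReal_sqrt_natCast_inv_mul_self, div_pow, ← pow_mul, ← pow_mul, ← exp_nat_mul,
      ← exp_nat_mul, ← exp_add, ← exp_sub]
    congr 2
    push_cast
    ring
  simp only [Matrix.mul_apply, Matrix.conjTranspose_apply, hterm, ← mul_sum]
  rw [Fin.sum_univ_eq_sum_range (fun k => (_ : ℂ) ^ k),
    (isPrimitiveRoot_exp M hM).sum_range_div_pow_eq_ite i.isLt j.isLt]
  simp [Matrix.one_apply, Fin.val_inj, hM]

theorem dftMatrix_inv (M : ℕ) : (dftMatrix M)⁻¹ = (dftMatrix M)ᴴ :=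
  inv_eq_left_inv (dftMatrix_conjTranspose_mul_self M)

theorem bakerMatrix_apply (N : ℕ) (n m : Fin N) :
    bakerMatrix N n m = exp (Real.pi * I * (n : ℕ) / N) * ((dftMatrix N)ᴴ * Dmat N) n m /
      exp (Real.pi * I * (m : ℕ) / N) ^ 2 := by
  have hZinv : (Zmat N ^ 2)⁻¹ =
      diagonal fun k : Fin N => (exp (Real.pi * I * (k : ℕ) / N) ^ 2)⁻¹ :=
    inv_eq_left_inv (by simp [Zmat, diagonal_pow, exp_ne_zero])
  rw [bakerMatrix, dftMatrix_inv, hZinv, Zmat, Matrix.mul_assoc (diagonal _), mul_diagonal,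
    diagonal_mul]
  exact (div_eq_mul_inv _ _).symm

theorem Dmat_castAdd_castAdd (M : ℕ) (i j : Fin M) :
    Dmat (M + M) (Fin.castAdd M i) (Fin.castAdd M j) = dftMatrix M i j := by
  simp [Dmat, dftMatrix, show (M + M) / 2 = M by omega]

theorem Dmat_castAdd_natAdd (M : ℕ) (i j : Fin M) :
    Dmat (M + M) (Fin.castAdd M i) (Fin.natAdd M j) = 0 := by
  simp [Dmat, show (M + M) / 2 = M by omega]

theorem Dmat_natAdd_castAdd (M : ℕ) (i j : Fin M) :
    Dmat (M + M) (Fin.natAdd M i) (Fin.castAdd M j) = 0 := by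
  simp [Dmat, show (M + M) / 2 = M by omega]

theorem Dmat_natAdd_natAdd (M : ℕ) (i j : Fin M) :
    Dmat (M + M) (Fin.natAdd M i) (Fin.natAdd M j) = -dftMatrix M i j := by
  simp [Dmat, dftMatrix, show (M + M) / 2 = M by omega]

theorem dftEntry_add_self_two_mul (M i t : ℕ) :
    dftEntry (M + M) i (2 * t) = ((√2 : ℝ) : ℂ)⁻¹ * dftEntry M i t := by
  rcases eq_or_ne M 0 with rfl | hM
  · simp [dftEntry]
  rw [dftEntry, dftEntry, ← mul_assoc, ← mul_inv, ← ofReal_mul, ← Real.sqrt_mul zero_le_two,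
    Nat.cast_add, ← two_mul]
  congr 2
  push_cast
  field_simp
  ring

theorem dftEntry_add_left (M i t : ℕ) : dftEntry M (M + i) t = dftEntry M i t := by
  rcases eq_or_ne M 0 with rfl | hM
  · simp
  rw [dftEntry, dftEntry, show -(2 * Real.pi * I * ((M + i : ℕ) : ℂ) * t) / M =
    -(2 * Real.pi * I * i * t) / M - t * (2 * Real.pi * I) by push_cast; field_simp; ring,
    exp_sub, exp_nat_mul_two_pi_mul_I, div_one]

theorem exp_pi_I_mul_two_mul_div (N k : ℕ) :
    exp (Real.pi * I * ((2 * k : ℕ) : ℂ) / N) = exp (Real.pi * I * k / N) ^ 2 := by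
  rw [← exp_nat_mul]
  push_cast
  ring_nf

theorem exp_pi_I_mul_add_div_add_self_sq {M : ℕ} (hM : M ≠ 0) (k : ℕ) :
    exp (Real.pi * I * ((M + k : ℕ) : ℂ) / (M + M : ℕ)) ^ 2 =
      -exp (Real.pi * I * ((2 * k : ℕ) : ℂ) / (M + M : ℕ)) := by
  rw [← exp_nat_mul, show (2 : ℕ) * (Real.pi * I * ((M + k : ℕ) : ℂ) / (M + M : ℕ)) =
    Real.pi * I + Real.pi * I * ((2 * k : ℕ) : ℂ) / (M + M : ℕ) by push_cast; field_simp; ring,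
    exp_add, exp_pi_mul_I, neg_one_mul]

section EvenRow

variable {M : ℕ} {n : Fin (M + M)} {t : Fin M}

theorem dftMatrix_castAdd_of_val_eq_two_mul (hn : (n : ℕ) = 2 * t) (i : Fin M) :
    dftMatrix (M + M) (Fin.castAdd M i) n = ((√2 : ℝ) : ℂ)⁻¹ * dftMatrix M i t := by
  simp [dftMatrix, hn, dftEntry_add_self_two_mul]

theorem dftMatrix_natAdd_of_val_eq_two_mul (hn : (n : ℕ) = 2 * t) (i : Fin M) :
    dftMatrix (M + M) (Fin.natAdd M i) n = ((√2 : ℝ) : ℂ)⁻¹ * dftMatrix M i t := by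
  simp only [dftMatrix, of_apply, Fin.val_natAdd, hn, dftEntry_add_self_two_mul, dftEntry_add_left]

theorem conjTranspose_dftMatrix_mul_Dmat_castAdd (hn : (n : ℕ) = 2 * t) (j : Fin M) :
    ((dftMatrix (M + M))ᴴ * Dmat (M + M)) n (Fin.castAdd M j) =
      ((√2 : ℝ) : ℂ)⁻¹ * ((dftMatrix M)ᴴ * dftMatrix M) t j := by
  rw [Matrix.mul_apply, Fin.sum_univ_add, Matrix.mul_apply, mul_sum]
  simp only [conjTranspose_apply, Dmat_castAdd_castAdd, Dmat_natAdd_castAdd,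
    dftMatrix_castAdd_of_val_eq_two_mul hn, mul_zero, sum_const_zero, add_zero]
  simp [mul_assoc]

theorem conjTranspose_dftMatrix_mul_Dmat_natAdd (hn : (n : ℕ) = 2 * t) (j : Fin M) :
    ((dftMatrix (M + M))ᴴ * Dmat (M + M)) n (Fin.natAdd M j) =
      -(((√2 : ℝ) : ℂ)⁻¹ * ((dftMatrix M)ᴴ * dftMatrix M) t j) := by
  rw [Matrix.mul_apply, Fin.sum_univ_add, Matrix.mul_apply, mul_sum]
  simp only [conjTranspose_apply, Dmat_castAdd_natAdd, Dmat_natAdd_natAdd,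
    dftMatrix_natAdd_of_val_eq_two_mul hn, mul_zero, sum_const_zero, zero_add]
  simp [mul_assoc]

theorem bakerMatrix_castAdd_of_val_eq_two_mul (hn : (n : ℕ) = 2 * t) (j : Fin M) :
    bakerMatrix (M + M) n (Fin.castAdd M j) = if t = j then ((√2 : ℝ) : ℂ)⁻¹ else 0 := by
  rw [bakerMatrix_apply, conjTranspose_dftMatrix_mul_Dmat_castAdd hn,
    dftMatrix_conjTranspose_mul_self, one_apply]
  split_ifs with htj
  · rw [hn, htj, Fin.val_castAdd, exp_pi_I_mul_two_mul_div]
    field_simp [exp_ne_zero]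
  · simp

theorem bakerMatrix_natAdd_of_val_eq_two_mul (hn : (n : ℕ) = 2 * t) (j : Fin M) :
    bakerMatrix (M + M) n (Fin.natAdd M j) = if t = j then ((√2 : ℝ) : ℂ)⁻¹ else 0 := by
  rw [bakerMatrix_apply, conjTranspose_dftMatrix_mul_Dmat_natAdd hn,
    dftMatrix_conjTranspose_mul_self, one_apply]
  split_ifs with htj
  · rw [hn, htj, Fin.val_natAdd, exp_pi_I_mul_add_div_add_self_sq (by have := j.pos; omega)]
    field_simp [exp_ne_zero]
  · simp

end EvenRow

theorem bakerMatrix_even_row_general (N : ℕ) (hNeven : Even N)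
    (n m : Fin N) (hn : Even (n : ℕ)) :
    bakerMatrix N n m =
      if (n : ℕ) % N = (2 * (m : ℕ)) % N then ((Real.sqrt 2 : ℝ) : ℂ)⁻¹ else 0 := by
  obtain ⟨M, rfl⟩ := hNeven
  obtain ⟨r, hr⟩ := hn
  set t : Fin M := ⟨r, by omega⟩
  have hnt : (n : ℕ) = 2 * t := by simp only [t]; omega
  rw [Nat.mod_eq_of_lt n.isLt]
  induction m using Fin.addCases with
  | left j =>
    rw [bakerMatrix_castAdd_of_val_eq_two_mul hnt, Fin.val_castAdd, Nat.mod_eq_of_lt (by omega)]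
    exact if_congr (by rw [Fin.ext_iff]; omega) rfl rfl
  | right j =>
    rw [bakerMatrix_natAdd_of_val_eq_two_mul hnt, Fin.val_natAdd,
      show 2 * (M + j) = 2 * j + (M + M) by ring, Nat.add_mod_right, Nat.mod_eq_of_lt (by omega)]
    exact if_congr (by rw [Fin.ext_iff]; omega) rfl rfl

/-- Even rows of the quantum baker matrix: for `n` even,
`𝖡_{nm} = 1/√2` if `n ≡ 2m (mod N)` and `0` otherwise. -/
theorem bakerMatrix_even_row (N : ℕ) (hN : 0 < N) (hNeven : Even N)
    (n m : Fin N) (hn : Even (n : ℕ)) :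
    bakerMatrix N n m =
      if (n : ℕ) % N = (2 * (m : ℕ)) % N then ((Real.sqrt 2 : ℝ) : ℂ)⁻¹ else 0 :=
  bakerMatrix_even_row_general N hNeven n m hn

end
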